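/- Let D be a Hermitian Dirac operator with zero diagonal on n vertices and let {i,j} be a bridge of G_D, i.e. an edge of G_D whose removal disconnects i from j. Then d^D(i,j) = w^D(i,j) = ℓ^D(i,j), i.e. the noncommutative distance between i and j equals |D_{ij}|^{-1} and equals the geodesic distance. -/

import Mathlib

open scoped ENNReal

/-- The operator norm on square matrices induced by the Euclidean (ℓ²) norm. -/
noncomputable def opNorm {ι : Type*} [Finite ι] (M : Matrix ι ι ℂ) : ℝ :=
  letI := Fintype.ofFinite ι
  letI := Classical.decEq ι
  ‖Matrix.toEuclideanCLM (𝕜 := ℂ) M‖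

/-- The commutator `[D, π(a)]` of a matrix with the diagonal matrix of `a`. -/
noncomputable def commD {ι : Type*} [Finite ι] (D : Matrix ι ι ℂ) (a : ι → ℂ) : Matrix ι ι ℂ :=
  letI := Fintype.ofFinite ι
  letI := Classical.decEq ι
  D * Matrix.diagonal a - Matrix.diagonal a * D

/-- Connes' noncommutative distance associated to the Dirac operator `D`. -/
noncomputable def ncDist {ι : Type*} [Finite ι] (D : Matrix ι ι ℂ) (i j : ι) : ℝ≥0∞ :=
  ⨆ (a : ι → ℂ) (_ : opNorm (commD D a) ≤ 1), ENNReal.ofReal ‖a i - a j‖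

/-- The weight of an edge: the inverse of `|D i j|` (infinite if `D i j = 0`). -/
noncomputable def eWeight {ι : Type*} (D : Matrix ι ι ℂ) (u v : ι) : ℝ≥0∞ :=
  (ENNReal.ofReal ‖D u v‖)⁻¹

/-- Adjacency in the graph `G_D`. -/
def Adjac {ι : Type*} (D : Matrix ι ι ℂ) (u v : ι) : Prop := u ≠ v ∧ D u v ≠ 0

/-- The length of a walk `i :: p` computed with weights `eWeight D`. -/
noncomputable def walkLength {ι : Type*} (D : Matrix ι ι ℂ) : ι → List ι → ℝ≥0∞
  | _, [] => 0
  | u, v :: rest => eWeight D u v + walkLength D v rest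

/-- `i :: p` is a walk from `i` to `j` in the graph `G_D`. -/
def IsWalk {ι : Type*} (D : Matrix ι ι ℂ) (i j : ι) (p : List ι) : Prop :=
  List.Chain (Adjac D) i p ∧ (i :: p).getLast (List.cons_ne_nil _ _) = j

/-- `i` and `j` lie in the same connected component of `G_D`. -/
def Conn {ι : Type*} (D : Matrix ι ι ℂ) (i j : ι) : Prop := ∃ p, IsWalk D i j p

/-- The geodesic (weighted shortest-path) distance on `G_D`. -/
noncomputable def gDist {ι : Type*} (D : Matrix ι ι ℂ) (i j : ι) : ℝ≥0∞ :=
  ⨅ (p : List ι) (_ : IsWalk D i j p), walkLength D i p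


/-!
The bound `d(i,j) ≤ |D i j|⁻¹` holds for every `D`: the `(i,j)` entry of `[D, π(a)]` is
`D i j (a j - a i)`, and entries are bounded by the operator norm. For the reverse bound take `a`
equal to `0` on the component of `j` in `G_D` minus the bridge and to `|D i j|⁻¹` elsewhere. Then
`[D, π(a)]` vanishes off the two bridge entries, both of modulus `1`, so it is a weighted
permutation matrix for the transposition `(i j)` and has norm `≤ 1`. Geodesically, every walk
from `i` to `j` crosses the bridge, so it is at least as long as the one-edge walk.
-/

open Matrix

section OperatorNorm

variable {ι : Type*} [Fintype ι] [DecidableEq ι]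

lemma opNorm_eq_norm_toEuclideanCLM (M : Matrix ι ι ℂ) :
    opNorm M = ‖toEuclideanCLM (𝕜 := ℂ) M‖ := by
  unfold opNorm
  congr!

lemma commD_apply (D : Matrix ι ι ℂ) (a : ι → ℂ) (u v : ι) :
    commD D a u v = D u v * (a v - a u) := by
  have h : commD D a = D * diagonal a - diagonal a * D := by
    unfold commD
    congr!
  rw [h, Matrix.sub_apply, mul_diagonal, diagonal_mul]
  ring

lemma norm_apply_le_opNorm (M : Matrix ι ι ℂ) (u v : ι) : ‖M u v‖ ≤ opNorm M := by
  set T := toEuclideanCLM (𝕜 := ℂ) M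
  calc ‖M u v‖ = ‖T (PiLp.single 2 v 1) u‖ := by
        simp [T, ← PiLp.toLp_single, toEuclideanCLM_toLp, mulVec_single]
    _ ≤ ‖T (PiLp.single 2 v 1)‖ := PiLp.norm_apply_le _ _
    _ ≤ opNorm M := by
        simpa [opNorm_eq_norm_toEuclideanCLM] using T.le_opNorm (PiLp.single 2 v 1)

lemma opNorm_le_one_of_support_perm (M : Matrix ι ι ℂ) (σ : Equiv.Perm ι)
    (hsupp : ∀ u v, v ≠ σ u → M u v = 0) (hle : ∀ u, ‖M u (σ u)‖ ≤ 1) : opNorm M ≤ 1 := by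
  rw [opNorm_eq_norm_toEuclideanCLM]
  refine ContinuousLinearMap.opNorm_le_bound _ zero_le_one fun x => ?_
  have happly : ∀ u, toEuclideanCLM (𝕜 := ℂ) M x u = M u (σ u) * x (σ u) := fun u => by
    rw [ofLp_toEuclideanCLM, mulVec, dotProduct]
    exact Fintype.sum_eq_single (σ u) fun v hv => by rw [hsupp u v hv, zero_mul]
  rw [one_mul, ← sq_le_sq₀ (norm_nonneg _) (norm_nonneg _), EuclideanSpace.norm_sq_eq,
    EuclideanSpace.norm_sq_eq, ← Equiv.sum_comp σ (fun v => ‖x v‖ ^ 2)]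
  refine Finset.sum_le_sum fun u _ => ?_
  rw [happly, norm_mul, mul_pow]
  exact mul_le_of_le_one_left (sq_nonneg _) (pow_le_one₀ (norm_nonneg _) (hle u))

end OperatorNorm

section Graph

variable {ι : Type*} {D : Matrix ι ι ℂ} {u v w : ι}

lemma isWalk_cons_iff {p : List ι} : IsWalk D u w (v :: p) ↔ Adjac D u v ∧ IsWalk D v w p := by
  change List.IsChain _ (u :: v :: p) ∧ _ ↔ _ ∧ List.IsChain _ (v :: p) ∧ _
  rw [List.isChain_cons_cons, List.getLast_cons_cons, and_assoc]

lemma Conn.refl (u : ι) : Conn D u u := ⟨[], List.IsChain.singleton u, rfl⟩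

lemma Conn.cons (h : Adjac D u v) (hc : Conn D v w) : Conn D u w :=
  let ⟨p, hp⟩ := hc
  ⟨v :: p, isWalk_cons_iff.2 ⟨h, hp⟩⟩

lemma Adjac.symm (hD : D.IsHermitian) (h : Adjac D u v) : Adjac D v u :=
  ⟨h.1.symm, fun h0 => h.2 (by rw [← hD.apply u v, h0, star_zero])⟩

lemma conn_iff_of_adjac (hD : D.IsHermitian) (h : Adjac D u v) : Conn D u w ↔ Conn D v w :=
  ⟨Conn.cons (h.symm hD), Conn.cons h⟩

lemma eWeight_comm (hD : D.IsHermitian) (u v : ι) : eWeight D u v = eWeight D v u := by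
  rw [eWeight, eWeight, ← hD.apply u v, norm_star]

lemma gDist_le_eWeight {i j : ι} (h : Adjac D i j) : gDist D i j ≤ eWeight D i j :=
  (iInf₂_le [j] ⟨List.isChain_pair.2 h, rfl⟩).trans_eq (add_zero _)

variable [DecidableEq ι]

def eraseEdge (D : Matrix ι ι ℂ) (i j : ι) : Matrix ι ι ℂ :=
  Matrix.of fun a b => if (a = i ∧ b = j) ∨ (a = j ∧ b = i) then 0 else D a b

lemma adjac_eraseEdge_iff {i j : ι} :
    Adjac (eraseEdge D i j) u v ↔ Adjac D u v ∧ ¬((u = i ∧ v = j) ∨ (u = j ∧ v = i)) := by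
  unfold Adjac eraseEdge
  by_cases h : (u = i ∧ v = j) ∨ (u = j ∧ v = i) <;> simp [h]

lemma isHermitian_eraseEdge (hD : D.IsHermitian) (i j : ι) : (eraseEdge D i j).IsHermitian := by
  ext u v
  simp only [conjTranspose_apply, eraseEdge, of_apply]
  by_cases h : (u = i ∧ v = j) ∨ (u = j ∧ v = i)
  · rw [if_pos h, if_pos (by tauto), star_zero]
  · rw [if_neg h, if_neg (by tauto), hD.apply]

lemma IsWalk.conn_eraseEdge_or_eWeight_le (hD : D.IsHermitian) {i j : ι} :
    ∀ {p : List ι} {u : ι}, IsWalk D u w p →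
      Conn (eraseEdge D i j) u w ∨ eWeight D i j ≤ walkLength D u p
  | [], u, hp => by
      obtain rfl : u = w := hp.2
      exact Or.inl (Conn.refl u)
  | v :: p, u, hp => by
      obtain ⟨huv, hp⟩ := isWalk_cons_iff.1 hp
      rcases hp.conn_eraseEdge_or_eWeight_le hD with hconn | hle
      · by_cases hedge : (u = i ∧ v = j) ∨ (u = j ∧ v = i)
        · right
          refine le_trans ?_ le_self_add
          rcases hedge with ⟨rfl, rfl⟩ | ⟨rfl, rfl⟩
          exacts [le_rfl, (eWeight_comm hD v u).le]
        · exact Or.inl (Conn.cons (adjac_eraseEdge_iff.2 ⟨huv, hedge⟩) hconn)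
      · exact Or.inr (hle.trans le_add_self)

lemma eWeight_le_gDist_of_not_conn_eraseEdge (hD : D.IsHermitian) {i j : ι}
    (hbridge : ¬Conn (eraseEdge D i j) i j) : eWeight D i j ≤ gDist D i j :=
  le_iInf₂ fun _ hp => (hp.conn_eraseEdge_or_eWeight_le hD).resolve_left hbridge

end Graph

section Distance

variable {ι : Type*} [Fintype ι] [DecidableEq ι]

lemma ncDist_le_eWeight (D : Matrix ι ι ℂ) (i j : ι) : ncDist D i j ≤ eWeight D i j := by
  refine iSup₂_le fun a ha => ?_
  have hentry : ‖D i j‖ * ‖a i - a j‖ ≤ 1 := by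
    simpa only [commD_apply, norm_mul, norm_sub_rev] using
      (norm_apply_le_opNorm _ i j).trans ha
  rw [eWeight, ENNReal.le_inv_iff_mul_le, ← ENNReal.ofReal_mul (norm_nonneg _), mul_comm]
  exact ENNReal.ofReal_le_one.2 hentry

omit [DecidableEq ι] in
lemma le_ncDist {D : Matrix ι ι ℂ} (a : ι → ℂ) (ha : opNorm (commD D a) ≤ 1) (i j : ι) :
    ENNReal.ofReal ‖a i - a j‖ ≤ ncDist D i j :=
  le_iSup₂ (f := fun (a : ι → ℂ) (_ : opNorm (commD D a) ≤ 1) => ENNReal.ofReal ‖a i - a j‖) a ha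

lemma commD_eq_zero_of_eraseEdge {D : Matrix ι ι ℂ} {i j : ι} {a : ι → ℂ}
    (ha : ∀ u v, Adjac (eraseEdge D i j) u v → a u = a v) {u v : ι}
    (huv : ¬((u = i ∧ v = j) ∨ (u = j ∧ v = i))) : commD D a u v = 0 := by
  rw [commD_apply]
  by_cases hD : D u v = 0
  · rw [hD, zero_mul]
  obtain rfl | hne := eq_or_ne u v
  · rw [sub_self, mul_zero]
  rw [ha u v (adjac_eraseEdge_iff.2 ⟨⟨hne, hD⟩, huv⟩), sub_self, mul_zero]

open Classical in
noncomputable def bridgeTestFunction (D : Matrix ι ι ℂ) (i j : ι) (u : ι) : ℂ :=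
  if Conn (eraseEdge D i j) u j then 0 else ((‖D i j‖⁻¹ : ℝ) : ℂ)

lemma eWeight_le_ncDist_of_not_conn_eraseEdge {D : Matrix ι ι ℂ} (hD : D.IsHermitian) {i j : ι}
    (hDij : D i j ≠ 0) (hbridge : ¬Conn (eraseEdge D i j) i j) : eWeight D i j ≤ ncDist D i j := by
  set a := bridgeTestFunction D i j
  have hai : a i = ((‖D i j‖⁻¹ : ℝ) : ℂ) := if_neg hbridge
  have haj : a j = 0 := if_pos (Conn.refl j)
  have hconst : ∀ u v, Adjac (eraseEdge D i j) u v → a u = a v := fun u v h => by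
    simp only [a, bridgeTestFunction]
    congr 1
    exact propext (conn_iff_of_adjac (isHermitian_eraseEdge hD i j) h)
  have hentry : ∀ u v, ‖commD D a u v‖ ≤ 1 := by
    intro u v
    by_cases hedge : (u = i ∧ v = j) ∨ (u = j ∧ v = i)
    · have hnorm_ij : ‖D i j‖ * ‖((‖D i j‖⁻¹ : ℝ) : ℂ)‖ ≤ 1 := by
        rw [Complex.norm_real, norm_inv, norm_norm]
        exact mul_inv_le_one
      rcases hedge with ⟨rfl, rfl⟩ | ⟨rfl, rfl⟩
      · rwa [commD_apply, hai, haj, zero_sub, norm_mul, norm_neg]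
      · rwa [commD_apply, hai, haj, sub_zero, norm_mul, ← hD.apply, norm_star]
    · rw [commD_eq_zero_of_eraseEdge hconst hedge, norm_zero]
      exact zero_le_one
  have hnorm : opNorm (commD D a) ≤ 1 := by
    refine opNorm_le_one_of_support_perm _ (Equiv.swap i j) (fun u v hv => ?_)
      (fun u => hentry u _)
    refine commD_eq_zero_of_eraseEdge hconst ?_
    rintro (⟨rfl, rfl⟩ | ⟨rfl, rfl⟩) <;> simp at hv
  calc eWeight D i j = ENNReal.ofReal ‖a i - a j‖ := by
        rw [hai, haj, sub_zero, Complex.norm_real, norm_inv, norm_norm, eWeight,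
          ENNReal.ofReal_inv_of_pos (norm_pos_iff.2 hDij)]
    _ ≤ ncDist D i j := le_ncDist a hnorm i j

end Distance

theorem stmt6_general {n : ℕ} (D : Matrix (Fin n) (Fin n) ℂ)
    (hherm : D.IsHermitian) (i j : Fin n)
    (hadj : Adjac D i j)
    (hbridge : ¬ Conn
      (Matrix.of fun a b => if (a = i ∧ b = j) ∨ (a = j ∧ b = i) then 0 else D a b) i j) :
    ncDist D i j = eWeight D i j ∧ ncDist D i j = gDist D i j := by
  have hnc : ncDist D i j = eWeight D i j :=
    (ncDist_le_eWeight D i j).antisymm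
      (eWeight_le_ncDist_of_not_conn_eraseEdge hherm hadj.2 hbridge)
  have hgeod : gDist D i j = eWeight D i j :=
    (gDist_le_eWeight hadj).antisymm (eWeight_le_gDist_of_not_conn_eraseEdge hherm hbridge)
  exact ⟨hnc, hnc.trans hgeod.symm⟩

theorem stmt6 {n : ℕ} (D : Matrix (Fin n) (Fin n) ℂ)
    (hherm : D.IsHermitian) (hdiag : ∀ i, D i i = 0) (i j : Fin n)
    (hadj : Adjac D i j)
    (hbridge : ¬ Conn
      (Matrix.of fun a b => if (a = i ∧ b = j) ∨ (a = j ∧ b = i) then 0 else D a b) i j) :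
    ncDist D i j = eWeight D i j ∧ ncDist D i j = gDist D i j :=
  stmt6_general D hherm i j hadj hbridge
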